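/- Let 𝒞 = {C_1,…,C_k} be a partition of {1,…,m}, let p ∈ (0,1), and let z be drawn from the independent cluster design D(𝒞, p). Then for φ ≥ 0, the Exposure-Design objective satisfies Σ_{i=1}^n Var[x_i] − φ Σ_{i≠j} Cov(x_i, x_j) = 4p(1−p) · Σ_{r=1}^k Σ_{i ∈ C_r} Σ_{j ∈ C_r} ω_{ij}, where ω_{ij} = (1+φ) Σ_{k=1}^n W_{ki} W_{kj} − φ (Σ_{k=1}^n W_{ki})(Σ_{k=1}^n W_{kj}). -/

import Mathlib

open Finset Matrix

/-- The sign map from Booleans to `{-1, 1} ⊆ ℝ`. -/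
def sgn (b : Bool) : ℝ := if b then 1 else -1

/-- Expectation of `f` under the (finitely supported) design `D`. -/
noncomputable def pexp {α : Type*} [Fintype α] (D f : α → ℝ) : ℝ :=
  ∑ ω, D ω * f ω

/-- Variance of `f` under the design `D`. -/
noncomputable def pvar {α : Type*} [Fintype α] (D f : α → ℝ) : ℝ :=
  pexp D (fun ω => (f ω - pexp D f) ^ 2)

/-- Covariance of `f` and `g` under the design `D`. -/
noncomputable def pcov {α : Type*} [Fintype α] (D f g : α → ℝ) : ℝ :=
  pexp D (fun ω => (f ω - pexp D f) * (g ω - pexp D g))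

/-! The exposures are linear in the cluster signs `sgn (η r)`, which are independent with
variance `4p(1-p)`, so by bilinearity `Cov(x_i, x_j) = 4p(1-p) Σ_{c a = c b} W_{ia} W_{jb}`.
Writing the off-diagonal covariances as `Var(Σ_i x_i) - Σ_i Var(x_i)` turns the objective into
`(1+φ) Σ_i Var(x_i) - φ Var(Σ_i x_i)`, and `Σ_i x_i` is again linear in the signs, with the
column sums of `W` as coefficients. -/

section LinearCombinations

variable {α ι κ : Type*} [Fintype α] (D : α → ℝ)

theorem pexp_sum (s : Finset ι) (f : ι → α → ℝ) :
    pexp D (fun ω => ∑ a ∈ s, f a ω) = ∑ a ∈ s, pexp D (f a) := by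
  simp only [pexp, mul_sum]
  exact sum_comm

theorem pexp_const_mul (r : ℝ) (f : α → ℝ) : pexp D (fun ω => r * f ω) = r * pexp D f := by
  simp only [pexp, mul_sum]
  exact sum_congr rfl fun ω _ => by ring

theorem sum_mul_sub_pexp (s : Finset ι) (u : ι → ℝ) (f : ι → α → ℝ) (ω : α) :
    ∑ a ∈ s, u a * f a ω - pexp D (fun ω => ∑ a ∈ s, u a * f a ω)
      = ∑ a ∈ s, u a * (f a ω - pexp D (f a)) := by
  simp only [pexp_sum, pexp_const_mul, mul_sub, sum_sub_distrib]

theorem pcov_sum_mul_sum (s : Finset ι) (t : Finset κ) (u : ι → ℝ) (v : κ → ℝ)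
    (f : ι → α → ℝ) (g : κ → α → ℝ) :
    pcov D (fun ω => ∑ a ∈ s, u a * f a ω) (fun ω => ∑ b ∈ t, v b * g b ω)
      = ∑ a ∈ s, ∑ b ∈ t, u a * v b * pcov D (f a) (g b) := by
  simp only [pcov, sum_mul_sub_pexp]
  simp only [sum_mul_sum, pexp_sum, ← pexp_const_mul]
  exact sum_congr rfl fun a _ => sum_congr rfl fun b _ => congrArg _ (funext fun ω => by ring)

theorem pvar_eq_pcov (f : α → ℝ) : pvar D f = pcov D f f := by
  simp only [pvar, pcov, sq]

end LinearCombinations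

section BernoulliDesign

variable {ι : Type*} [Fintype ι] [DecidableEq ι] (p : ℝ)

def bernoulliDesign (η : ι → Bool) : ℝ := ∏ r, if η r then p else 1 - p

theorem pexp_bernoulliDesign_prod (F : ι → Bool → ℝ) :
    pexp (bernoulliDesign p) (fun η => ∏ r, F r (η r))
      = ∏ r, (p * F r true + (1 - p) * F r false) := by
  simp only [pexp, bernoulliDesign, ← prod_mul_distrib]
  refine (Fintype.prod_sum fun r b => (if b then p else 1 - p) * F r b).symm.trans ?_
  simp

theorem pexp_bernoulliDesign_apply (r : ι) (g : Bool → ℝ) :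
    pexp (bernoulliDesign p) (fun η => g (η r)) = p * g true + (1 - p) * g false := by
  have h := pexp_bernoulliDesign_prod p fun t b => if t = r then g b else 1
  simp only [prod_ite_eq', mem_univ, if_true] at h
  rw [h, prod_eq_single r (fun t _ ht => by simp [ht]) (by simp)]
  simp

theorem pexp_bernoulliDesign_apply_mul_apply {r t : ι} (hrt : r ≠ t) (g h : Bool → ℝ) :
    pexp (bernoulliDesign p) (fun η => g (η r) * h (η t))
      = (p * g true + (1 - p) * g false) * (p * h true + (1 - p) * h false) := by
  have H := pexp_bernoulliDesign_prod p fun s b =>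
    (if s = r then g b else 1) * (if s = t then h b else 1)
  simp only [prod_mul_distrib, prod_ite_eq', mem_univ, if_true] at H
  rw [H, ← prod_subset (subset_univ {r, t}) fun s _ hs => ?_, prod_pair hrt]
  · simp [hrt, hrt.symm]
  · simp only [mem_insert, mem_singleton, not_or] at hs
    simp [hs.1, hs.2]

theorem pexp_sgn_bernoulliDesign (r : ι) :
    pexp (bernoulliDesign p) (fun η => sgn (η r)) = 2 * p - 1 := by
  rw [pexp_bernoulliDesign_apply]
  simp only [sgn, if_true, Bool.false_eq_true, if_false]
  ring

theorem pcov_sgn_bernoulliDesign (r t : ι) :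
    pcov (bernoulliDesign p) (fun η => sgn (η r)) (fun η => sgn (η t))
      = if r = t then 4 * p * (1 - p) else 0 := by
  simp only [pcov, pexp_sgn_bernoulliDesign]
  split_ifs with hrt
  · subst hrt
    refine (pexp_bernoulliDesign_apply p r fun b =>
      (sgn b - (2 * p - 1)) * (sgn b - (2 * p - 1))).trans ?_
    simp only [sgn, if_true, Bool.false_eq_true, if_false]
    ring
  · refine (pexp_bernoulliDesign_apply_mul_apply p hrt (fun b => sgn b - (2 * p - 1))
      (fun b => sgn b - (2 * p - 1))).trans ?_
    simp only [sgn, if_true, Bool.false_eq_true, if_false]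
    ring

end BernoulliDesign

theorem sum_offDiag_eq_sum_sum_sub_sum {ι M : Type*} [DecidableEq ι] [AddCommGroup M]
    (s : Finset ι) (f : ι → ι → M) :
    ∑ pr ∈ s.offDiag, f pr.1 pr.2 = ∑ i ∈ s, ∑ j ∈ s, f i j - ∑ i ∈ s, f i i := by
  rw [eq_sub_iff_add_eq, ← sum_product' s s f, ← diag_union_offDiag,
    sum_union (disjoint_diag_offDiag s), sum_diag, add_comm]

theorem sum_pvar_sub_mul_sum_pcov_offDiag {α ι : Type*} [Fintype α] [DecidableEq ι]
    (D : α → ℝ) (s : Finset ι) (f : ι → α → ℝ) (φ : ℝ) :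
    ∑ i ∈ s, pvar D (f i) - φ * ∑ pr ∈ s.offDiag, pcov D (f pr.1) (f pr.2)
      = (1 + φ) * ∑ i ∈ s, pvar D (f i) - φ * pvar D (fun ω => ∑ i ∈ s, f i ω) := by
  have hsum := pcov_sum_mul_sum D s s 1 1 f f
  simp only [Pi.one_apply, one_mul] at hsum
  rw [sum_offDiag_eq_sum_sum_sub_sum s fun i j => pcov D (f i) (f j), ← hsum]
  simp only [pvar_eq_pcov]
  ring

theorem pcov_sum_mul_sgn_bernoulliDesign {ι κ : Type*} [Fintype ι] [DecidableEq ι] (p : ℝ)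
    (c : κ → ι) (s t : Finset κ) (u v : κ → ℝ) :
    pcov (bernoulliDesign p) (fun η => ∑ a ∈ s, u a * sgn (η (c a)))
        (fun η => ∑ b ∈ t, v b * sgn (η (c b)))
      = 4 * p * (1 - p) * ∑ a ∈ s, ∑ b ∈ t, if c a = c b then u a * v b else 0 := by
  have h := pcov_sum_mul_sum (bernoulliDesign p) s t u v (fun a η => sgn (η (c a)))
    fun b η => sgn (η (c b))
  rw [h]
  simp only [pcov_sgn_bernoulliDesign, mul_sum, mul_ite, mul_zero]
  exact sum_congr rfl fun a _ => sum_congr rfl fun b _ => by split_ifs <;> ring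

theorem exposure_design_cluster_formula_general
    (n m k : ℕ)
    (W : Matrix (Fin n) (Fin m) ℝ)
    (c : Fin m → Fin k)
    (p : ℝ)
    (φ : ℝ)
    (D : (Fin k → Bool) → ℝ)
    (hD : ∀ η, D η = ∏ r, (if η r then p else 1 - p))
    (x : Fin n → (Fin k → Bool) → ℝ)
    (hx : ∀ i η, x i η = ∑ j, W i j * sgn (η (c j)))
    (w : Fin m → Fin m → ℝ)
    (hw : ∀ a b, w a b = (1 + φ) * ∑ l, W l a * W l b
        - φ * (∑ l, W l a) * (∑ l, W l b)) :
    (∑ i, pvar D (x i))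
      - φ * ∑ pr ∈ (Finset.univ : Finset (Fin n)).offDiag, pcov D (x pr.1) (x pr.2)
      = 4 * p * (1 - p) * ∑ a, ∑ b, (if c a = c b then w a b else 0) := by
  rw [sum_pvar_sub_mul_sum_pcov_offDiag]
  obtain rfl : D = bernoulliDesign p := funext hD
  obtain rfl : x = fun i η => ∑ j, W i j * sgn (η (c j)) := funext fun i => funext (hx i)
  have htotal : (fun η => ∑ i, ∑ j, W i j * sgn (η (c j)))
      = fun η : Fin k → Bool => ∑ j, (∑ i, W i j) * sgn (η (c j)) :=
    funext fun η => sum_comm.trans (sum_congr rfl fun j _ => (sum_mul ..).symm)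
  have hdiag : ∑ i, ∑ a, ∑ b, (if c a = c b then W i a * W i b else 0)
      = ∑ a, ∑ b, if c a = c b then ∑ i, W i a * W i b else 0 := by
    rw [sum_comm]
    refine sum_congr rfl fun a _ => ?_
    rw [sum_comm]
    simp only [sum_ite_irrel, sum_const_zero]
  have hw_ite : ∀ a b, (if c a = c b then w a b else 0)
      = (1 + φ) * (if c a = c b then ∑ l, W l a * W l b else 0)
        - φ * (if c a = c b then (∑ l, W l a) * (∑ l, W l b) else 0) := by
    intro a b
    split_ifs
    · rw [hw]; ring
    · ring
  simp only [htotal, pvar_eq_pcov, pcov_sum_mul_sgn_bernoulliDesign, ← mul_sum, hdiag, hw_ite,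
    sum_sub_distrib]
  ring

/-- Under the independent cluster design `D(𝒞, p)` (clusters encoded by
the assignment map `c : Fin m → Fin k`, cluster-level coins `η : Fin k → Bool`, and
`z_j = sgn (η (c j))`), the Exposure-Design objective equals
`4p(1−p)` times the in-cluster sum of the correlation-clustering weights `ω_{ab}`. -/
theorem exposure_design_cluster_formula
    (n m k : ℕ) (hn : 0 < n) (hm : 0 < m)
    (W : Matrix (Fin n) (Fin m) ℝ)
    (c : Fin m → Fin k) (hc : Function.Surjective c)
    (p : ℝ) (hp0 : 0 < p) (hp1 : p < 1)
    (φ : ℝ) (hφ : 0 ≤ φ)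
    (D : (Fin k → Bool) → ℝ)
    (hD : ∀ η, D η = ∏ r, (if η r then p else 1 - p))
    (x : Fin n → (Fin k → Bool) → ℝ)
    (hx : ∀ i η, x i η = ∑ j, W i j * sgn (η (c j)))
    (w : Fin m → Fin m → ℝ)
    (hw : ∀ a b, w a b = (1 + φ) * ∑ l, W l a * W l b
        - φ * (∑ l, W l a) * (∑ l, W l b)) :
    (∑ i, pvar D (x i))
      - φ * ∑ pr ∈ (Finset.univ : Finset (Fin n)).offDiag, pcov D (x pr.1) (x pr.2)
      = 4 * p * (1 - p) * ∑ a, ∑ b, (if c a = c b then w a b else 0) :=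
  exposure_design_cluster_formula_general n m k W c p φ D hD x hx w hw
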